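/- Suppose the passwords are partitioned into equivalence sets by a classification map cls : Fin n → Fin m such that any two passwords in the same equivalence set have the same prob900bability and the same hash cost (cls i = cls j implies p i = p j and k i = k j), the equivalence sets are indexed in nonincreasing bang-for-buck order (whenever c ≤ c', i ∈ cls⁻¹(c) and j ∈ cls⁻¹(c'), one has p i·k j ≥ p j·k i), and π₀ is any guessing order that enumerates the equivalence sets in index order (a ≤ b implies cls(π₀(a)) ≤ cls(π₀(b))). Then the greedy algorithm that checks equivalence sets set-by-set is optimal: the maximum of U(π, B) over all permutations π and budgets B ≤ n equals the maximum over t ≤ m of U(π₀, S_t), where S_t = Σ_{c < t} |cls⁻¹(c)|. -/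

import Mathlib

open Finset

/-- Success probability λ(π,B): sum of probabilities of the first B guesses. -/
noncomputable def lam (n : ℕ) (p : Fin n → ℝ) (π : Equiv.Perm (Fin n)) (B : ℕ) : ℝ :=
  ∑ t : Fin n, if t.val < B then p (π t) else 0

/-- Attacker utility U(π,B) = v·λ(π,B) − Σ_{t<B} k(π(t))·(1 − λ(π,t)). -/
noncomputable def U (n : ℕ) (p k : Fin n → ℝ) (v : ℝ) (π : Equiv.Perm (Fin n)) (B : ℕ) : ℝ :=
  v * lam n p π B - ∑ t : Fin n, if t.val < B then k (π t) * (1 - lam n p π t.val) else 0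

/-!
The utility of an order only depends on the list of guesses, and swapping two adjacent guesses
`x, y` changes it by `k x * p y - k y * p x`; hence sorting any list along `π₀`, i.e. by
nonincreasing bang-for-buck, never decreases its utility. Take a utility-maximising list of
minimal length and sort it. Its last guess `x` has positive marginal gain, while every unguessed
`j` has nonpositive marginal gain after it; as the accumulated success probability only grows,
this forces `p j * k x < p x * k j`, so `j` lies in a later class than `x`. The list therefore
consists of the classes below some `t`, and being sorted along `π₀` it is the prefix of `π₀` of
length `S_t`.
-/

section ListUtility

variable {α : Type*} (p k : α → ℝ) (v : ℝ)

/-- `listUtility p k v Λ l` is the utility of guessing the list `l` after earlier guesses have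
already succeeded with probability `Λ`. -/
noncomputable def listUtility : ℝ → List α → ℝ
  | _, [] => 0
  | Λ, x :: l => (v * p x - k x * (1 - Λ)) + listUtility (Λ + p x) l

theorem listUtility_append (Λ : ℝ) (l₁ l₂ : List α) :
    listUtility p k v Λ (l₁ ++ l₂)
      = listUtility p k v Λ l₁ + listUtility p k v (Λ + (l₁.map p).sum) l₂ := by
  induction l₁ generalizing Λ with
  | nil => simp [listUtility]
  | cons x l ih =>
    simp only [List.cons_append, listUtility, ih, List.map_cons, List.sum_cons, add_assoc]

theorem listUtility_concat (Λ : ℝ) (l : List α) (x : α) :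
    listUtility p k v Λ (l ++ [x])
      = listUtility p k v Λ l + (v * p x - k x * (1 - (Λ + (l.map p).sum))) := by
  simp [listUtility_append, listUtility]

theorem listUtility_cons_cons (Λ : ℝ) (x y : α) (l : List α) :
    listUtility p k v Λ (y :: x :: l)
      = listUtility p k v Λ (x :: y :: l) + (k x * p y - k y * p x) := by
  simp only [listUtility]
  rw [add_right_comm Λ (p y) (p x)]
  ring

variable {p k v} {r : α → α → Prop} [DecidableRel r]

theorem listUtility_le_orderedInsert (hr : ∀ x y, ¬ r x y → p x * k y ≤ p y * k x)
    (x : α) (l : List α) (Λ : ℝ) :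
    listUtility p k v Λ (x :: l) ≤ listUtility p k v Λ (l.orderedInsert r x) := by
  induction l generalizing Λ with
  | nil => rfl
  | cons y l ih =>
    rw [List.orderedInsert_cons]
    split_ifs with hxy
    · rfl
    · calc listUtility p k v Λ (x :: y :: l)
          ≤ listUtility p k v Λ (y :: x :: l) := by
            rw [listUtility_cons_cons]; linarith [hr x y hxy]
        _ ≤ listUtility p k v Λ (y :: l.orderedInsert r x) :=
            add_le_add_right (ih (Λ + p y)) _

theorem listUtility_le_insertionSort (hr : ∀ x y, ¬ r x y → p x * k y ≤ p y * k x)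
    (l : List α) (Λ : ℝ) :
    listUtility p k v Λ l ≤ listUtility p k v Λ (l.insertionSort r) := by
  induction l generalizing Λ with
  | nil => rfl
  | cons x l ih =>
    calc listUtility p k v Λ (x :: l)
        ≤ listUtility p k v Λ (x :: l.insertionSort r) := add_le_add_right (ih (Λ + p x)) _
      _ ≤ listUtility p k v Λ ((x :: l).insertionSort r) :=
          listUtility_le_orderedInsert hr x _ Λ

end ListUtility

section ShortestMaximizer

variable {α : Type*}

structure IsShortestMaximizer (f : List α → ℝ) (l : List α) : Prop where
  nodup : l.Nodup
  le : ∀ l', l'.Nodup → f l' ≤ f l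
  length_le : ∀ l', l'.Nodup → f l' = f l → l.length ≤ l'.length

theorem exists_isShortestMaximizer [Fintype α] (f : List α → ℝ) :
    ∃ l, IsShortestMaximizer f l := by
  classical
  obtain ⟨l₀, -, hl₀⟩ := exists_max_image (univ : Finset {l : List α // l.Nodup})
    (fun l => f l.1) ⟨⟨[], List.nodup_nil⟩, mem_univ _⟩
  obtain ⟨l, hfl, hmin⟩ := exists_min_image
    ({l | f l.1 = f l₀.1} : Finset {l : List α // l.Nodup}) (fun l => l.1.length)
    ⟨l₀, by simp⟩
  rw [mem_filter_univ] at hfl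
  refine ⟨l.1, l.2, fun l' hl' => hfl ▸ hl₀ ⟨l', hl'⟩ (mem_univ _), fun l' hl' hfl' => ?_⟩
  exact hmin ⟨l', hl'⟩ (by simp [hfl', hfl])

theorem IsShortestMaximizer.of_perm {f : List α → ℝ} {l l' : List α}
    (h : IsShortestMaximizer f l) (hperm : l'.Perm l) (hle : f l ≤ f l') :
    IsShortestMaximizer f l' where
  nodup := hperm.nodup_iff.2 h.nodup
  le l'' hl'' := (h.le l'' hl'').trans hle
  length_le l'' hl'' hf := hperm.length_eq ▸
    h.length_le l'' hl'' (hf.trans (le_antisymm (h.le l' (hperm.nodup_iff.2 h.nodup)) hle))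

end ShortestMaximizer

section Gains

variable {α : Type*} {p k : α → ℝ} {v : ℝ}

theorem IsShortestMaximizer.gain_last_pos {l : List α} {x : α}
    (h : IsShortestMaximizer (listUtility p k v 0) (l ++ [x])) :
    0 < v * p x - k x * (1 - (l.map p).sum) := by
  have hl : l.Nodup := h.nodup.sublist (List.sublist_append_left l [x])
  have hne : listUtility p k v 0 l ≠ listUtility p k v 0 (l ++ [x]) := fun he => by
    simpa using h.length_le l hl he
  have := lt_of_le_of_ne (h.le l hl) hne
  rw [listUtility_concat, zero_add] at this
  linarith

theorem IsShortestMaximizer.gain_nonpos_of_notMem {l : List α} {j : α}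
    (h : IsShortestMaximizer (listUtility p k v 0) l) (hj : j ∉ l) :
    v * p j - k j * (1 - (l.map p).sum) ≤ 0 := by
  have hnd : (l ++ [j]).Nodup := h.nodup.append (List.nodup_singleton j) (by simpa using hj)
  have := h.le _ hnd
  rw [listUtility_concat, zero_add] at this
  linarith

theorem mul_lt_mul_of_gain_pos_of_gain_nonpos {v px kx pj kj Λ : ℝ} (hv : 0 ≤ v) (hpx : 0 ≤ px)
    (hkx : 0 < kx) (hkj : 0 < kj) (hx : 0 < v * px - kx * (1 - Λ))
    (hj : v * pj - kj * (1 - (Λ + px)) ≤ 0) : pj * kx < px * kj := by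
  refine lt_of_mul_lt_mul_left ?_ hv
  calc v * (pj * kx) ≤ kj * (1 - (Λ + px)) * kx := by nlinarith
    _ ≤ kj * (1 - Λ) * kx := by nlinarith [mul_nonneg (mul_nonneg hkj.le hkx.le) hpx]
    _ < kj * (v * px) := by nlinarith
    _ = v * (px * kj) := by ring

theorem IsShortestMaximizer.mul_lt_mul_of_notMem (hv : 0 ≤ v) (hk : ∀ i, 0 < k i)
    {l : List α} {x j : α} (hpx : 0 ≤ p x)
    (h : IsShortestMaximizer (listUtility p k v 0) (l ++ [x])) (hj : j ∉ l ++ [x]) :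
    p j * k x < p x * k j := by
  have hgain := h.gain_nonpos_of_notMem hj
  rw [List.map_append, List.sum_append, List.map_singleton, List.sum_singleton] at hgain
  exact mul_lt_mul_of_gain_pos_of_gain_nonpos hv hpx (hk x) (hk j) h.gain_last_pos hgain

theorem IsShortestMaximizer.exists_threshold {m : ℕ} (hv : 0 ≤ v) (hp : ∀ i, 0 ≤ p i)
    (hk : ∀ i, 0 < k i) (cls : α → Fin m) (horder : ∀ i j, cls i ≤ cls j → p i * k j ≥ p j * k i)
    {l : List α} (h : IsShortestMaximizer (listUtility p k v 0) l)
    (hsort : l.Pairwise (fun x y => cls x ≤ cls y)) :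
    ∃ t ≤ m, ∀ j, j ∈ l ↔ (cls j).val < t := by
  rcases l.eq_nil_or_concat' with rfl | ⟨l, x, rfl⟩
  · exact ⟨0, Nat.zero_le m, by simp⟩
  refine ⟨(cls x).val + 1, (cls x).isLt, fun j => ⟨fun hj => ?_, fun hj => ?_⟩⟩
  · have : cls j ≤ cls x := by
      rcases List.mem_append.1 hj with hj | hj
      · exact (List.pairwise_append.1 hsort).2.2 j hj x (List.mem_singleton_self x)
      · rw [List.mem_singleton.1 hj]
    exact Nat.lt_succ_of_le this
  · by_contra hjl
    exact (horder j x (Nat.le_of_lt_succ hj)).not_gt (h.mul_lt_mul_of_notMem hv hk (hp x) hjl)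

end Gains

section Prefixes
variable {n : ℕ}

theorem sum_ite_val_lt_succ {B : ℕ} (hB : B < n) (f : Fin n → ℝ) :
    (∑ t : Fin n, if t.val < B + 1 then f t else 0)
      = (∑ t : Fin n, if t.val < B then f t else 0) + f ⟨B, hB⟩ := by
  rw [← Fintype.sum_ite_eq' (⟨B, hB⟩ : Fin n) f, ← sum_add_distrib]
  refine sum_congr rfl fun t _ => ?_
  rcases lt_trichotomy t.val B with h | h | h
  · simp [h, Nat.lt_succ_of_lt h, Fin.ext_iff, h.ne]
  · simp [h, Fin.ext_iff]
  · simp [h.ne', Fin.ext_iff, not_lt.2 h.le, not_lt.2 (Nat.succ_le_of_lt h)]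

theorem take_succ_ofFn {α : Type*} (f : Fin n → α) {B : ℕ} (hB : B < n) :
    (List.ofFn f).take (B + 1) = (List.ofFn f).take B ++ [f ⟨B, hB⟩] := by
  simp [List.take_add_one, hB]

theorem lam_succ (p : Fin n → ℝ) (π : Equiv.Perm (Fin n)) {B : ℕ} (hB : B < n) :
    lam n p π (B + 1) = lam n p π B + p (π ⟨B, hB⟩) :=
  sum_ite_val_lt_succ hB _

theorem U_succ (p k : Fin n → ℝ) (v : ℝ) (π : Equiv.Perm (Fin n)) {B : ℕ} (hB : B < n) :
    U n p k v π (B + 1)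
      = U n p k v π B + (v * p (π ⟨B, hB⟩) - k (π ⟨B, hB⟩) * (1 - lam n p π B)) := by
  rw [U, U, lam_succ p π hB, sum_ite_val_lt_succ hB]
  ring

theorem lam_eq_sum_take (p : Fin n → ℝ) (π : Equiv.Perm (Fin n)) {B : ℕ} (hB : B ≤ n) :
    lam n p π B = (((List.ofFn π).take B).map p).sum := by
  induction B with
  | zero => simp [lam]
  | succ B ih =>
    rw [lam_succ p π hB, ih (Nat.le_of_succ_le hB), take_succ_ofFn π hB]
    simp

theorem U_eq_listUtility_take (p k : Fin n → ℝ) (v : ℝ) (π : Equiv.Perm (Fin n)) {B : ℕ}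
    (hB : B ≤ n) : U n p k v π B = listUtility p k v 0 ((List.ofFn π).take B) := by
  induction B with
  | zero => simp [U, lam, listUtility]
  | succ B ih =>
    rw [U_succ p k v π hB, ih (Nat.le_of_succ_le hB), take_succ_ofFn π hB, listUtility_concat,
      zero_add, lam_eq_sum_take p π (Nat.le_of_succ_le hB)]

theorem Fin.mem_iff_lt_card_of_isLowerSet {A : Finset (Fin n)}
    (hA : IsLowerSet (A : Set (Fin n))) (a : Fin n) : a ∈ A ↔ a.val < A.card := by
  rcases hA.eq_univ_or_Iio with h | ⟨b, h⟩
  · rw [coe_eq_univ.1 h]; simp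
  · rw [coe_inj.1 (h.trans (coe_Iio b).symm), mem_Iio, Fin.card_Iio, Fin.lt_def]

theorem Equiv.Perm.mem_take_ofFn_iff (π : Equiv.Perm (Fin n)) (B : ℕ) (j : Fin n) :
    j ∈ (List.ofFn π).take B ↔ (π.symm j).val < B := by
  simp only [List.mem_take_iff_getElem, List.length_ofFn, List.getElem_ofFn, lt_min_iff]
  constructor
  · rintro ⟨i, ⟨hiB, hin⟩, rfl⟩
    simpa using hiB
  · intro hj
    exact ⟨(π.symm j).val, ⟨hj, (π.symm j).isLt⟩, by simp⟩

theorem Equiv.Perm.take_length_ofFn_eq (π : Equiv.Perm (Fin n)) {l : List (Fin n)}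
    (hnd : l.Nodup) (hsort : l.Pairwise (fun x y => π.symm x ≤ π.symm y))
    (hdown : ∀ x y, π.symm x ≤ π.symm y → y ∈ l → x ∈ l) :
    (List.ofFn π).take l.length = l := by
  classical
  set A : Finset (Fin n) := univ.filter (fun a => π a ∈ l) with hAdef
  have hA : IsLowerSet (A : Set (Fin n)) := fun b a hab hb => by
    simpa [hAdef] using hdown (π a) (π b) (by simpa using hab) (by simpa [hAdef] using hb)
  have hcard : A.card = l.length := by
    rw [← List.toFinset_card_of_nodup hnd, ← card_map π.toEmbedding]
    congr 1
    ext j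
    simp [hAdef]
  have hmem : ∀ j, j ∈ l ↔ (π.symm j).val < l.length := fun j => by
    rw [← hcard, ← Fin.mem_iff_lt_card_of_isLowerSet hA]
    simp [hAdef]
  have : Std.Antisymm (fun x y : Fin n => π.symm x ≤ π.symm y) :=
    ⟨fun _ _ h₁ h₂ => π.symm.injective (le_antisymm h₁ h₂)⟩
  refine List.Perm.eq_of_pairwise' ?_ hsort ?_
  · exact (List.pairwise_ofFn.2 fun i j hij => by simpa using hij.le).sublist
      (List.take_sublist _ _)
  · refine List.perm_of_nodup_nodup_toFinset_eq
      ((List.nodup_ofFn.2 π.injective).sublist (List.take_sublist _ _)) hnd ?_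
    ext j
    simp only [List.mem_toFinset, π.mem_take_ofFn_iff, hmem]

end Prefixes

theorem card_filter_val_lt_eq_sum_card_fiber {α : Type*} [Fintype α] {m : ℕ} (cls : α → Fin m)
    (t : ℕ) :
    #{i | (cls i).val < t} = ∑ c ∈ univ.filter (fun c : Fin m => c.val < t), #{i | cls i = c} := by
  classical
  rw [card_eq_sum_card_fiberwise (f := cls) (t := univ.filter (fun c : Fin m => c.val < t))
    (fun i hi => by simpa using hi)]
  refine sum_congr rfl fun c hc => congrArg card ?_
  ext i
  simp only [mem_filter, mem_univ, true_and] at hc ⊢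
  exact ⟨And.right, fun h => ⟨h ▸ hc, h⟩⟩

theorem stmt_12_general (n m : ℕ) (p k : Fin n → ℝ) (v : ℝ)
    (hp : ∀ i, 0 ≤ p i) (hk : ∀ i, 0 < k i) (hv : 0 ≤ v)
    (cls : Fin n → Fin m)
    (horder : ∀ i j : Fin n, cls i ≤ cls j → p i * k j ≥ p j * k i)
    (π₀ : Equiv.Perm (Fin n))
    (hπ₀ : ∀ a b : Fin n, a ≤ b → cls (π₀ a) ≤ cls (π₀ b)) :
    ∃ t ≤ m, ∃ B : ℕ,
      B = (∑ c ∈ Finset.univ.filter (fun c : Fin m => c.val < t),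
        (Finset.univ.filter (fun i : Fin n => cls i = c)).card) ∧
      B ≤ n ∧
      (∀ (π : Equiv.Perm (Fin n)) (B' : ℕ), B' ≤ n →
        U n p k v π B' ≤ U n p k v π₀ B) := by
  classical
  set r : Fin n → Fin n → Prop := fun x y => π₀.symm x ≤ π₀.symm y
  have hr_cls : ∀ x y, r x y → cls x ≤ cls y := fun x y h => by simpa using hπ₀ _ _ h
  have : Std.Total r := ⟨fun x y => le_total _ _⟩
  have : IsTrans (Fin n) r := ⟨fun _ _ _ => le_trans⟩
  obtain ⟨l₀, hl₀⟩ := exists_isShortestMaximizer (listUtility p k v 0)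
  set l := l₀.insertionSort r
  have hsort : l.Pairwise r := List.pairwise_insertionSort r l₀
  have hl : IsShortestMaximizer (listUtility p k v 0) l :=
    hl₀.of_perm (List.perm_insertionSort r l₀) (listUtility_le_insertionSort
      (fun x y hxy => horder y x (hr_cls y x (not_le.1 hxy).le)) l₀ 0)
  obtain ⟨t, htm, hmem⟩ := hl.exists_threshold hv hp hk cls horder (hsort.imp (hr_cls _ _))
  have hprefix : (List.ofFn π₀).take l.length = l := π₀.take_length_ofFn_eq hl.nodup hsort
    fun x y hxy hy => (hmem x).2 (lt_of_le_of_lt (hr_cls x y hxy) ((hmem y).1 hy))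
  have hlen : l.length ≤ n := by simpa using hl.nodup.length_le_card
  refine ⟨t, htm, l.length, ?_, hlen, fun π B' hB' => ?_⟩
  · rw [← card_filter_val_lt_eq_sum_card_fiber, ← List.toFinset_card_of_nodup hl.nodup]
    congr 1
    ext j
    simp [hmem]
  · rw [U_eq_listUtility_take p k v π hB', U_eq_listUtility_take p k v π₀ hlen, hprefix]
    exact hl.le _ ((List.nodup_ofFn.2 π.injective).sublist (List.take_sublist _ _))

theorem stmt_12 (n m : ℕ) (p k : Fin n → ℝ) (v : ℝ)
    (hp : ∀ i, 0 ≤ p i) (hpsum : ∑ i, p i ≤ 1) (hk : ∀ i, 0 < k i) (hv : 0 ≤ v)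
    (cls : Fin n → Fin m)
    (hcls : ∀ i j, cls i = cls j → p i = p j ∧ k i = k j)
    (horder : ∀ i j : Fin n, cls i ≤ cls j → p i * k j ≥ p j * k i)
    (π₀ : Equiv.Perm (Fin n))
    (hπ₀ : ∀ a b : Fin n, a ≤ b → cls (π₀ a) ≤ cls (π₀ b)) :
    ∃ t ≤ m, ∃ B : ℕ,
      B = (∑ c ∈ Finset.univ.filter (fun c : Fin m => c.val < t),
        (Finset.univ.filter (fun i : Fin n => cls i = c)).card) ∧
      B ≤ n ∧
      (∀ (π : Equiv.Perm (Fin n)) (B' : ℕ), B' ≤ n →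
        U n p k v π B' ≤ U n p k v π₀ B) :=
  stmt_12_general n m p k v hp hk hv cls horder π₀ hπ₀
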